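/- Let n ≥ 1 and m ≥ 2, and let K_{n,m} = K̄_n ∨ K̄_m be the complete bipartite graph with left part of size n and right part of size m. For any nonempty S contained in the left part V(K̄_n), |P(S; K_{n,m})| = |S|! · m · (n + m − |S| − 1)!. -/

import Mathlib

open SimpleGraph

/-- A vertex `v` is a peak of the labeling `ℓ` of the graph `G` if `v` has degree at least 2
and the label of `v` is larger than the labels of all its neighbors. -/
def IsPeak {V : Type*} {n : ℕ} (G : SimpleGraph V) (ℓ : V ≃ Fin n) (v : V) : Prop :=
  2 ≤ (G.neighborSet v).ncard ∧ ∀ w, G.Adj v w → ℓ w < ℓ v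

/-- The peak set of a labeling `ℓ` of the graph `G`. -/
def peakSet {V : Type*} {n : ℕ} (G : SimpleGraph V) (ℓ : V ≃ Fin n) : Set V :=
  {v | IsPeak G ℓ v}

/-- `P(S;G)`: the set of labelings of `G` (bijections from `V(G)` to `{1,…,n}`,
here realized as equivalences `V ≃ Fin n` with `n = |V(G)|`) whose peak set is exactly `S`. -/
def peakLabelings {V : Type*} [Fintype V] (G : SimpleGraph V) (S : Set V) :
    Set (V ≃ Fin (Fintype.card V)) :=
  {ℓ | peakSet G ℓ = S}

/-- The join of two simple graphs: keep all edges of both graphs and connect every vertex of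
the first graph with every vertex of the second graph. -/
def graphJoin {V₁ V₂ : Type*} (G₁ : SimpleGraph V₁) (G₂ : SimpleGraph V₂) :
    SimpleGraph (V₁ ⊕ V₂) where
  Adj a b :=
    match a, b with
    | Sum.inl u, Sum.inl v => G₁.Adj u v
    | Sum.inr u, Sum.inr v => G₂.Adj u v
    | Sum.inl _, Sum.inr _ => True
    | Sum.inr _, Sum.inl _ => True
  symm := ⟨by rintro (a | a) (b | b) h <;> first | trivial | exact h.symm⟩
  loopless := by
    constructor
    rintro (a | a) h
    exacts [G₁.loopless.irrefl _ h, G₂.loopless.irrefl _ h]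

/-- The cycle graph on `ℤ/nℤ`: `i` is adjacent to `i ± 1 (mod n)`. -/
def cycleZMod (n : ℕ) : SimpleGraph (ZMod n) where
  Adj i j := i ≠ j ∧ (i - j = 1 ∨ j - i = 1)
  symm := ⟨fun _ _ h => ⟨h.1.symm, h.2.symm⟩⟩
  loopless := ⟨fun _ h => h.1 rfl⟩

/-- The path graph on `{0, 1, …, n-1}`: `k` is adjacent to `k + 1`. -/
def pathGraph' (n : ℕ) : SimpleGraph (Fin n) where
  Adj a b := (a : ℕ) + 1 = (b : ℕ) ∨ (b : ℕ) + 1 = (a : ℕ)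
  symm := ⟨fun _ _ h => h.symm⟩
  loopless := ⟨fun a h => by omega⟩


open Classical in
noncomputable def setMapEquiv {α β : Type*} (s : Set α) (t : Set β) :
    {e : α ≃ β // ∀ x, x ∈ s ↔ e x ∈ t} ≃ (s ≃ t) × (↥sᶜ ≃ ↥tᶜ) where
  toFun e := (e.1.subtypeEquiv e.2,
              e.1.subtypeEquiv fun x => not_iff_not.mpr (e.2 x))
  invFun p := ⟨(Equiv.Set.sumCompl s).symm.trans ((p.1.sumCongr p.2).trans (Equiv.Set.sumCompl t)), by
      intro x
      by_cases hx : x ∈ s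
      · simp [Equiv.Set.sumCompl_symm_apply_of_mem hx, hx, Subtype.coe_prop]
      · simp [Equiv.Set.sumCompl_symm_apply_of_notMem hx, hx]
        exact (p.2 ⟨x, hx⟩).2⟩
  left_inv e := by
    ext x
    by_cases hx : x ∈ s
    · simp [Equiv.Set.sumCompl_symm_apply_of_mem hx]
    · simp [Equiv.Set.sumCompl_symm_apply_of_notMem hx]
  right_inv p := by
    obtain ⟨p1, p2⟩ := p
    refine Prod.ext ?_ ?_ <;> dsimp
    · ext x
      simp [Equiv.Set.sumCompl_symm_apply_of_mem x.2]
    · ext x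
      simp [Equiv.Set.sumCompl_symm_apply_of_notMem x.2]

lemma ncard_compl' {α : Type*} [Fintype α] (s : Set α) :
    Nat.card ↥sᶜ = Fintype.card α - s.ncard := by
  classical
  rw [Nat.card_eq_fintype_card, Fintype.card_compl_set]
  rw [← Nat.card_coe_set_eq, Nat.card_eq_fintype_card]

lemma card_setMapEquiv {α β : Type*} [Fintype α] [Fintype β] (s : Set α) (t : Set β)
    (hc : Fintype.card α = Fintype.card β) (hst : s.ncard = t.ncard) :
    Nat.card {e : α ≃ β // ∀ x, x ∈ s ↔ e x ∈ t} =
      s.ncard.factorial * (Fintype.card α - s.ncard).factorial := by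
  classical
  rw [Nat.card_congr (setMapEquiv s t), Nat.card_prod]
  have h1 : Fintype.card ↑s = Fintype.card ↑t := by
    rw [← Nat.card_eq_fintype_card, ← Nat.card_eq_fintype_card,
      Nat.card_coe_set_eq, Nat.card_coe_set_eq, hst]
  have h2 : Nat.card ↥sᶜ = Nat.card ↥tᶜ := by
    rw [ncard_compl', ncard_compl', hc, hst]
  rw [Nat.card_eq_fintype_card, Nat.card_eq_fintype_card,
    Fintype.card_equiv (Fintype.equivOfCardEq h1),
    Fintype.card_equiv (Fintype.equivOfCardEq (by
      rw [← Nat.card_eq_fintype_card, ← Nat.card_eq_fintype_card]; exact h2))]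
  rw [← Nat.card_eq_fintype_card, ← Nat.card_eq_fintype_card, Nat.card_coe_set_eq,
    ncard_compl']

lemma card_equiv_fix {α β : Type*} [Fintype α] [Fintype β]
    (hc : Fintype.card α = Fintype.card β) (b : α) (a : β) :
    Nat.card {e : α ≃ β // e b = a} = (Fintype.card α - 1).factorial := by
  have key : ∀ e : α ≃ β, (e b = a) ↔ ∀ x, x ∈ ({b} : Set α) ↔ e x ∈ ({a} : Set β) := by
    intro e
    constructor
    · intro h x
      simp only [Set.mem_singleton_iff]
      constructor
      · rintro rfl; exact h
      · intro hx; exact e.injective (hx.trans h.symm)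
    · intro h; exact (h b).1 rfl
  rw [Nat.card_congr (Equiv.subtypeEquivRight key), card_setMapEquiv _ _ hc (by simp),
    Set.ncard_singleton, Nat.factorial_one, one_mul]

lemma card_equiv_symm_mem {α β : Type*} [Fintype α] [Fintype β]
    (hc : Fintype.card α = Fintype.card β) (B : Set α) (a₀ : β) :
    Nat.card {e : α ≃ β // e.symm a₀ ∈ B} = B.ncard * (Fintype.card α - 1).factorial := by
  classical
  have E := Equiv.sigmaFiberEquiv
    (fun e : {e : α ≃ β // e.symm a₀ ∈ B} => (⟨e.1.symm a₀, e.2⟩ : B))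
  rw [← Nat.card_congr E, Nat.card_eq_fintype_card, Fintype.card_sigma]
  have hfib : ∀ b : B, Fintype.card {e : {e : α ≃ β // e.symm a₀ ∈ B} //
      (⟨e.1.symm a₀, e.2⟩ : B) = b} = (Fintype.card α - 1).factorial := by
    intro b
    have e1 : {e : {e : α ≃ β // e.symm a₀ ∈ B} // (⟨e.1.symm a₀, e.2⟩ : B) = b} ≃
        {e : α ≃ β // e.symm a₀ = (b : α)} := by
      refine (Equiv.subtypeEquivRight fun e => ?_).trans
        (Equiv.subtypeSubtypeEquivSubtype (p := fun e : α ≃ β => e.symm a₀ ∈ B)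
          (q := fun e : α ≃ β => e.symm a₀ = (b : α)) (fun {e} he => by rw [he]; exact b.2))
      rw [Subtype.ext_iff]
    have e2 : {e : α ≃ β // e.symm a₀ = (b : α)} ≃ {e : α ≃ β // e (b : α) = a₀} :=
      Equiv.subtypeEquivRight fun e => by
        rw [Equiv.symm_apply_eq, eq_comm]
    rw [← Nat.card_eq_fintype_card, Nat.card_congr (e1.trans e2), card_equiv_fix hc]
  rw [Finset.sum_congr rfl fun b _ => hfib b, Finset.sum_const, smul_eq_mul]
  congr 1
  rw [← Nat.card_coe_set_eq, Nat.card_eq_fintype_card, Finset.card_univ]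

def prodSubtypeSnd {γ δ : Type*} (Q : δ → Prop) : {p : γ × δ // Q p.2} ≃ γ × {d // Q d} where
  toFun p := (p.1.1, ⟨p.1.2, p.2⟩)
  invFun x := ⟨(x.1, x.2.1), x.2.2⟩
  left_inv _ := rfl
  right_inv _ := rfl

lemma card_main {α β : Type*} [Fintype α] [Fintype β] (s : Set α) (t : Set β)
    (hc : Fintype.card α = Fintype.card β) (hst : s.ncard = t.ncard)
    (B : Set α) (hB : B ⊆ sᶜ) (a₀ : β) (ha₀ : a₀ ∈ tᶜ) :
    Nat.card {e : α ≃ β // (∀ x, x ∈ s ↔ e x ∈ t) ∧ e.symm a₀ ∈ B} =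
      s.ncard.factorial * B.ncard * (Fintype.card α - s.ncard - 1).factorial := by
  classical
  have E1 : {e : α ≃ β // (∀ x, x ∈ s ↔ e x ∈ t) ∧ e.symm a₀ ∈ B} ≃
      {x : {e : α ≃ β // ∀ x, x ∈ s ↔ e x ∈ t} // x.1.symm a₀ ∈ B} :=
    (Equiv.subtypeSubtypeEquivSubtypeInter _ _).symm
  have E2 : {x : {e : α ≃ β // ∀ x, x ∈ s ↔ e x ∈ t} // x.1.symm a₀ ∈ B} ≃
      {y : (s ≃ t) × (↥sᶜ ≃ ↥tᶜ) // ((y.2.symm ⟨a₀, ha₀⟩ : ↥sᶜ) : α) ∈ B} := by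
    refine (setMapEquiv s t).subtypeEquiv fun x => ?_
    have : (((setMapEquiv s t) x).2.symm ⟨a₀, ha₀⟩ : α) = x.1.symm a₀ := by
      simp [setMapEquiv]
    rw [this]
  have E3 := prodSubtypeSnd (γ := s ≃ t)
    (fun y : ↥sᶜ ≃ ↥tᶜ => ((y.symm ⟨a₀, ha₀⟩ : ↥sᶜ) : α) ∈ B)
  rw [Nat.card_congr ((E1.trans E2).trans E3), Nat.card_prod]
  have h1 : Fintype.card ↑s = Fintype.card ↑t := by
    rw [← Nat.card_eq_fintype_card, ← Nat.card_eq_fintype_card,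
      Nat.card_coe_set_eq, Nat.card_coe_set_eq, hst]
  have hcardst : Nat.card (↥s ≃ ↥t) = s.ncard.factorial := by
    rw [Nat.card_eq_fintype_card, Fintype.card_equiv (Fintype.equivOfCardEq h1),
      ← Nat.card_eq_fintype_card, Nat.card_coe_set_eq]
  have hcc : Fintype.card ↥sᶜ = Fintype.card ↥tᶜ := by
    rw [← Nat.card_eq_fintype_card, ← Nat.card_eq_fintype_card, ncard_compl', ncard_compl',
      hc, hst]
  have h2 := card_equiv_symm_mem hcc {x : ↥sᶜ | (x : α) ∈ B} ⟨a₀, ha₀⟩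
  have h2' : Nat.card { d : ↥sᶜ ≃ ↥tᶜ // ((d.symm ⟨a₀, ha₀⟩ : ↥sᶜ) : α) ∈ B } =
      ({x : ↥sᶜ | (x : α) ∈ B}).ncard * (Fintype.card ↥sᶜ - 1).factorial := by
    rw [← h2]; exact Nat.card_congr (Equiv.subtypeEquivRight fun e => Iff.rfl)
  rw [hcardst, h2', ← Nat.card_eq_fintype_card, ncard_compl']
  have hB' : ({x : ↥sᶜ | (x : α) ∈ B}).ncard = B.ncard := by
    rw [← Nat.card_coe_set_eq, ← Nat.card_coe_set_eq, Set.coe_setOf]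
    exact Nat.card_congr (Equiv.subtypeSubtypeEquivSubtype (p := fun a => a ∈ sᶜ)
      (q := fun a => a ∈ B) fun {x} hx => hB hx)
  rw [hB', mul_assoc]

/-- for the complete bipartite graph `K_{n,m} = K̄_n ∨ K̄_m` with `n ≥ 1`,
`m ≥ 2`, and nonempty `S` contained in the left part,
`|P(S; K_{n,m})| = |S|! ⬝ m ⬝ (n + m − |S| − 1)!`. -/
theorem complete_bipartite_peak_count (n m : ℕ) (hn : 1 ≤ n) (hm : 2 ≤ m)
    (S : Set (Fin n)) (hS : S.Nonempty) :
    (peakLabelings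
        (graphJoin (⊥ : SimpleGraph (Fin n)) (⊥ : SimpleGraph (Fin m)))
        (Sum.inl '' S)).ncard =
      Nat.factorial S.ncard * m * Nat.factorial (n + m - S.ncard - 1) := by
  classical
  set V := (Fin n ⊕ Fin m)
  set G := graphJoin (⊥ : SimpleGraph (Fin n)) (⊥ : SimpleGraph (Fin m)) with hG
  set N := Fintype.card V with hNdef
  have hN : N = n + m := by simp [hNdef, V]
  set s' := S.ncard with hs'
  set T : Set V := Sum.inl '' S with hTdef
  have hT : T.ncard = s' := Set.ncard_image_of_injective S Sum.inl_injective
  have hs'n : s' ≤ n := by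
    have := Set.ncard_le_ncard (Set.subset_univ S) Set.finite_univ
    rwa [Set.ncard_univ, Nat.card_eq_fintype_card, Fintype.card_fin] at this
  have hs'1 : 1 ≤ s' := (Set.ncard_pos S.toFinite).mpr hS
  have hs'N : s' < N := by omega
  set a₀ : Fin N := ⟨N - s' - 1, by omega⟩ with ha₀def
  set topA : Set (Fin N) := {a | N - s' ≤ (a : ℕ)} with htopA
  -- membership facts
  have hmemT : ∀ u : Fin n, (Sum.inl u ∈ T) ↔ u ∈ S :=
    fun u => Sum.inl_injective.mem_set_image
  have hmemTr : ∀ v : Fin m, (Sum.inr v : V) ∉ T := by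
    rintro v ⟨u, _, h⟩; exact Sum.inl_ne_inr h
  -- adjacency facts
  have hadj_lr : ∀ (u : Fin n) (v : Fin m), G.Adj (Sum.inl u) (Sum.inr v) := fun _ _ => trivial
  have hadj_rl : ∀ (v : Fin m) (u : Fin n), G.Adj (Sum.inr v) (Sum.inl u) := fun _ _ => trivial
  have hadj_ll : ∀ (u u' : Fin n), ¬ G.Adj (Sum.inl u) (Sum.inl u') := fun _ _ h => h
  have hnbl : ∀ u : Fin n, G.neighborSet (Sum.inl u) = Set.range (Sum.inr : Fin m → V) := by
    intro u
    ext w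
    cases w with
    | inl u' => simp only [SimpleGraph.mem_neighborSet, Set.mem_range]
                exact ⟨fun h => absurd h (hadj_ll u u'), fun ⟨v, hv⟩ => absurd hv (by simp)⟩
    | inr v => simp only [SimpleGraph.mem_neighborSet, Set.mem_range]
               exact ⟨fun _ => ⟨v, rfl⟩, fun _ => hadj_lr u v⟩
  have hdegl : ∀ u : Fin n, 2 ≤ (G.neighborSet (Sum.inl u)).ncard := by
    intro u
    rw [hnbl u, ← Nat.card_coe_set_eq, Nat.card_range_of_injective Sum.inr_injective,
      Nat.card_eq_fintype_card, Fintype.card_fin]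
    exact hm
  -- the key order-forcing lemma
  have key : ∀ (ℓ : V ≃ Fin N), (∀ x ∈ T, ∀ y ∉ T, (ℓ y : ℕ) < ℓ x) →
      ∀ x, x ∈ T ↔ N - s' ≤ (ℓ x : ℕ) := by
    intro ℓ h x
    have hinj : Function.Injective (fun y : V => (ℓ y : ℕ)) :=
      Fin.val_injective.comp ℓ.injective
    constructor
    · intro hx
      have hsub : (Tᶜ.toFinset.image fun y => (ℓ y : ℕ)) ⊆ Finset.range (ℓ x) := by
        intro b hb
        simp only [Finset.mem_image, Set.mem_toFinset, Set.mem_compl_iff] at hb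
        obtain ⟨y, hy, rfl⟩ := hb
        exact Finset.mem_range.mpr (h x hx y hy)
      have hcard := Finset.card_le_card hsub
      rw [Finset.card_image_of_injective _ hinj, Finset.card_range,
        ← Set.ncard_eq_toFinset_card'] at hcard
      have hcompl : Tᶜ.ncard = N - s' := by
        rw [← Nat.card_coe_set_eq, ncard_compl', hT]
      omega
    · intro hx
      by_contra hxT
      have hsub : (T.toFinset.image fun y => (ℓ y : ℕ)) ⊆ Finset.Ico ((ℓ x : ℕ) + 1) N := by
        intro b hb
        simp only [Finset.mem_image, Set.mem_toFinset] at hb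
        obtain ⟨y, hy, rfl⟩ := hb
        exact Finset.mem_Ico.mpr ⟨h y hy x hxT, (ℓ y).is_lt⟩
      have hcard := Finset.card_le_card hsub
      rw [Finset.card_image_of_injective _ hinj, Nat.card_Ico,
        ← Set.ncard_eq_toFinset_card', hT] at hcard
      have := (ℓ x).is_lt
      omega
  -- characterization
  have hchar : peakLabelings G T =
      {ℓ : V ≃ Fin N | (∀ x, x ∈ T ↔ ℓ x ∈ topA) ∧
        ℓ.symm a₀ ∈ Set.range (Sum.inr : Fin m → V)} := by
    ext ℓ
    simp only [peakLabelings, Set.mem_setOf_eq]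
    constructor
    · intro hP
      have hpeak : ∀ u ∈ S, ∀ v : Fin m, (ℓ (Sum.inr v) : ℕ) < ℓ (Sum.inl u) := by
        intro u hu v
        have : Sum.inl u ∈ peakSet G ℓ := by rw [hP]; exact (hmemT u).mpr hu
        exact this.2 (Sum.inr v) (hadj_lr u v)
      have hnot : ∀ u, u ∉ S → ∃ v : Fin m, (ℓ (Sum.inl u) : ℕ) < ℓ (Sum.inr v) := by
        intro u hu
        have hnp : ¬ IsPeak G ℓ (Sum.inl u) := by
          intro hp
          have : Sum.inl u ∈ T := by rw [← hP]; exact hp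
          exact hu ((hmemT u).mp this)
        rw [IsPeak] at hnp
        push_neg at hnp
        obtain ⟨w, hw, hle⟩ := hnp (hdegl u)
        cases w with
        | inl u' => exact absurd hw (hadj_ll u u')
        | inr v =>
          refine ⟨v, ?_⟩
          have hne : ℓ (Sum.inl u) ≠ ℓ (Sum.inr v) := fun h =>
            Sum.inl_ne_inr (ℓ.injective h)
          have := Fin.le_def.mp hle
          have hne' : (ℓ (Sum.inl u) : ℕ) ≠ (ℓ (Sum.inr v) : ℕ) :=
            fun h => hne (Fin.val_injective h)
          omega
      have horder : ∀ x ∈ T, ∀ y ∉ T, (ℓ y : ℕ) < ℓ x := by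
        rintro x ⟨u, hu, rfl⟩ y hy
        cases y with
        | inl u' =>
          have hu' : u' ∉ S := fun h => hy ((hmemT u').mpr h)
          obtain ⟨v, hv⟩ := hnot u' hu'
          exact hv.trans (hpeak u hu v)
        | inr v => exact hpeak u hu v
      have h1 := key ℓ horder
      refine ⟨fun x => h1 x, ?_⟩
      rcases hsymm : ℓ.symm a₀ with u | v
      · exfalso
        have hval : ℓ (Sum.inl u) = a₀ := by rw [← hsymm, Equiv.apply_symm_apply]
        by_cases hu : u ∈ S
        · have := (h1 (Sum.inl u)).mp ((hmemT u).mpr hu)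
          rw [hval] at this
          simp only [ha₀def] at this
          omega
        · obtain ⟨v, hv⟩ := hnot u hu
          have h2 := (h1 (Sum.inr v)).not.mp (hmemTr v)
          rw [hval] at hv
          simp only [ha₀def] at hv
          omega
      · exact ⟨v, rfl⟩
    · rintro ⟨h1, v₀, hv₀⟩
      have hltr : ∀ v : Fin m, (ℓ (Sum.inr v) : ℕ) < N - s' := by
        intro v
        have := (h1 (Sum.inr v)).not.mp (hmemTr v)
        simp only [htopA, Set.mem_setOf_eq, not_le] at this
        exact this
      ext x
      cases x with
      | inl u =>
        simp only [peakSet, Set.mem_setOf_eq, hmemT u]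
        constructor
        · intro hp
          by_contra hu
          have hval : (ℓ (Sum.inr v₀) : ℕ) = N - s' - 1 := by
            rw [hv₀, Equiv.apply_symm_apply]
          have hlt := hp.2 (Sum.inr v₀) (hadj_lr u v₀)
          rw [Fin.lt_def] at hlt
          have hnt : (ℓ (Sum.inl u) : ℕ) < N - s' := by
            have := (h1 (Sum.inl u)).not.mp (fun h => hu ((hmemT u).mp h))
            simp only [htopA, Set.mem_setOf_eq, not_le] at this
            exact this
          omega
        · intro hu
          refine ⟨hdegl u, ?_⟩
          intro w hw
          cases w with
          | inl u' => exact absurd hw (hadj_ll u u')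
          | inr v =>
            rw [Fin.lt_def]
            have := (h1 (Sum.inl u)).mp ((hmemT u).mpr hu)
            simp only [htopA, Set.mem_setOf_eq] at this
            exact lt_of_lt_of_le (hltr v) this
      | inr v =>
        simp only [peakSet, Set.mem_setOf_eq]
        constructor
        · intro hp
          exfalso
          obtain ⟨u₀, hu₀⟩ := hS
          have hlt := hp.2 (Sum.inl u₀) (hadj_rl v u₀)
          rw [Fin.lt_def] at hlt
          have := (h1 (Sum.inl u₀)).mp ((hmemT u₀).mpr hu₀)
          simp only [htopA, Set.mem_setOf_eq] at this
          have := hltr v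
          omega
        · intro h; exact absurd h (hmemTr v)
    -- end hchar
  have htopAncard : topA.ncard = s' := by
    have : topA = Set.Ici (⟨N - s', by omega⟩ : Fin N) := by
      ext a
      simp only [htopA, Set.mem_setOf_eq, Set.mem_Ici, Fin.le_def]
    rw [this, Set.ncard_eq_toFinset_card', Set.toFinset_Ici, Fin.card_Ici]
    simp only
    omega
  have ha₀mem : a₀ ∈ topAᶜ := by
    simp only [htopA, Set.mem_compl_iff, Set.mem_setOf_eq, not_le, ha₀def]
    omega
  have hBsub : Set.range (Sum.inr : Fin m → V) ⊆ Tᶜ := by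
    rintro x ⟨v, rfl⟩; exact hmemTr v
  have hBncard : (Set.range (Sum.inr : Fin m → V)).ncard = m := by
    rw [← Nat.card_coe_set_eq, Nat.card_range_of_injective Sum.inr_injective,
      Nat.card_eq_fintype_card, Fintype.card_fin]
  have hfin : Fintype.card V = Fintype.card (Fin N) := by
    rw [Fintype.card_fin]
  rw [hchar, ← Nat.card_coe_set_eq, Set.coe_setOf]
  have := card_main T topA hfin (by rw [hT, htopAncard]) (Set.range (Sum.inr : Fin m → V))
    hBsub a₀ ha₀mem
  rw [this, hT, hBncard, ← hNdef, hN]
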